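/- Let M be a loopless matroid on a finite nonempty ground set E (with |E| = n) with set of bases ℬ, basis generating polynomial ψ_M(x) = Σ_{B∈ℬ} ∏_{e∈B} x_e, and c(M) = inf{ Σ_{B∈ℬ} c_B : c_B ≥ 0 and Σ_{B∈ℬ} c_B·χ_B ≥ 𝟙 componentwise }. Then for every real s > c(M) and every ε with 0 < ε ≤ e^{-1}, the function z ↦ 1 / ( ψ_M( (-ln|z_e|)_{e∈E} )^s · ∏_{e∈E} |z_e|^2 ) is integrable (with respect to Lebesgue measure on ℂ^E) on the ball { z ∈ ℂ^E : ‖z‖ < ε }. -/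

import Mathlib

/-!
Pick a fractional cover `c` of the ground set by bases with `∑ c_B < s`. For `x ≥ 𝟙`,
`∏ₑ xₑ ≤ ∏_B (∏_{e ∈ B} xₑ) ^ c_B ≤ ψ(x) ^ ∑ c_B`, and scaling `c` by
`p = (s + 1) / (∑ c_B + 1) > 1` gives `∏ₑ xₑ ^ p ≤ ψ(x) ^ s`. With `xₑ = -log ‖zₑ‖` the
integrand is thus dominated on the ball by `∏ₑ 1 / ((-log ‖zₑ‖) ^ p ‖zₑ‖²)`, a product of
one-variable functions, each integrable on the disc of radius `e⁻¹` since in polar coordinates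
it becomes `∫₀ dr / (r (-log r) ^ p) < ∞`.
-/

open MeasureTheory Set Real

lemma Real.image_exp_neg_Ioi (c : ℝ) : (fun t => exp (-t)) '' Ioi c = Ioo 0 (exp (-c)) := by
  rw [← image_exp_Iio, ← image_neg_Ioi, image_image]

/-- The substitution `r = exp (-t)` turns this into `∫_c^∞ t ^ (-p) dt`. -/
lemma integrableOn_inv_mul_neg_log_rpow {p c : ℝ} (hp : 1 < p) (hc : 0 < c) :
    IntegrableOn (fun r : ℝ => (r * (-log r) ^ p)⁻¹) (Ioo 0 (exp (-c))) := by
  rw [← image_exp_neg_Ioi, integrableOn_image_iff_integrableOn_abs_deriv_smul measurableSet_Ioi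
    (fun t _ => (hasDerivAt_neg t).exp.hasDerivWithinAt)
    (fun t _ u _ h => neg_injective (exp_injective h))]
  refine (integrableOn_Ioi_rpow_of_lt (neg_lt_neg hp) hc).congr_fun
    (fun t (ht : c < t) => ?_) measurableSet_Ioi
  have ht0 : 0 < t := hc.trans ht
  simp only [log_exp, neg_neg, smul_eq_mul, mul_neg, mul_one, abs_neg, abs_of_pos (exp_pos _)]
  rw [rpow_neg ht0.le, mul_inv, ← mul_assoc, mul_inv_cancel₀ (exp_pos _).ne', one_mul]

lemma integrableOn_ball_inv_neg_log_rpow_mul_norm_sq {p c : ℝ} (hp : 1 < p) (hc : 0 < c) :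
    IntegrableOn (fun w : ℂ => ((-log ‖w‖) ^ p * ‖w‖ ^ 2)⁻¹) (Metric.ball 0 (exp (-c))) := by
  rw [integrableOn_fun_norm_addHaar volume (f := fun r => ((-log r) ^ p * r ^ 2)⁻¹),
    Complex.finrank_real_complex]
  refine (integrableOn_inv_mul_neg_log_rpow hp hc).congr_fun
    (fun r (hr : 0 < r ∧ _) => ?_) measurableSet_Ioo
  rw [Nat.add_one_sub_one, pow_one, smul_eq_mul]
  field_simp

theorem MeasureTheory.IntegrableOn.fintype_prod {𝕜 ι E : Type*} [NormedCommRing 𝕜] [Fintype ι]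
    {mE : MeasurableSpace E} {μ : ι → Measure E} [∀ i, SigmaFinite (μ i)]
    {f : ι → E → 𝕜} {s : ι → Set E} (hf : ∀ i, IntegrableOn (f i) (s i) (μ i)) :
    IntegrableOn (fun x : ι → E => ∏ i, f i (x i)) (univ.pi s) (Measure.pi μ) := by
  rw [IntegrableOn, Measure.restrict_pi_pi]
  exact Integrable.fintype_prod hf

section FractionalCover

variable {α : Type*} [DecidableEq α] {ℬ : Finset (Finset α)}

lemma exists_fractionalCover_sum_lt (hloopless : ∀ e : α, ∃ B ∈ ℬ, e ∈ B) {s : ℝ}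
    (hs : sInf { t : ℝ | ∃ c : Finset α → ℝ, (∀ B ∈ ℬ, 0 ≤ c B) ∧
      (∀ e : α, 1 ≤ ∑ B ∈ ℬ, c B * (if e ∈ B then 1 else 0)) ∧ t = ∑ B ∈ ℬ, c B } < s) :
    ∃ c : Finset α → ℝ, (∀ B ∈ ℬ, 0 ≤ c B) ∧
      (∀ e : α, 1 ≤ ∑ B ∈ ℬ, c B * (if e ∈ B then 1 else 0)) ∧ ∑ B ∈ ℬ, c B < s := by
  have hone : ∀ e : α, 1 ≤ ∑ B ∈ ℬ, (1 : ℝ) * (if e ∈ B then 1 else 0) := fun e => by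
    obtain ⟨B, hB, heB⟩ := hloopless e
    simpa [heB] using Finset.single_le_sum
      (f := fun B : Finset α => (1 : ℝ) * (if e ∈ B then 1 else 0)) (fun B _ => by positivity) hB
  obtain ⟨_, ⟨c, hc0, hc1, rfl⟩, hcs⟩ :=
    exists_lt_of_csInf_lt (by exact ⟨_, fun _ => 1, fun _ _ => zero_le_one, hone, rfl⟩) hs
  exact ⟨c, hc0, hc1, hcs⟩

lemma prod_rpow_le_sum_prod_rpow_of_cover [Fintype α] {c : Finset α → ℝ} {a : ℝ} {x : α → ℝ}
    (hx : ∀ e, 1 ≤ x e) (hc : ∀ B ∈ ℬ, 0 ≤ c B)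
    (hcover : ∀ e, a ≤ ∑ B ∈ ℬ, c B * (if e ∈ B then 1 else 0)) :
    ∏ e, x e ^ a ≤ (∑ B ∈ ℬ, ∏ e ∈ B, x e) ^ ∑ B ∈ ℬ, c B := by
  have hx0 : ∀ e, 0 < x e := fun e => one_pos.trans_le (hx e)
  have hmono : ∀ B ∈ ℬ, 0 ≤ ∏ e ∈ B, x e := fun B _ => Finset.prod_nonneg fun e _ => (hx0 e).le
  calc ∏ e, x e ^ a
      ≤ ∏ e, x e ^ ∑ B ∈ ℬ, c B * (if e ∈ B then 1 else 0) :=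
        Finset.prod_le_prod (fun e _ => rpow_nonneg (hx0 e).le _)
          fun e _ => rpow_le_rpow_of_exponent_le (hx e) (hcover e)
    _ = ∏ e, ∏ B ∈ ℬ, if e ∈ B then x e ^ c B else 1 := by
        refine Finset.prod_congr rfl fun e _ => ?_
        rw [rpow_sum_of_pos (hx0 e)]
        refine Finset.prod_congr rfl fun B _ => ?_
        split_ifs <;> simp
    _ = ∏ B ∈ ℬ, ∏ e ∈ B, x e ^ c B := by
        rw [Finset.prod_comm]
        refine Finset.prod_congr rfl fun B _ => ?_
        rw [Finset.prod_ite_mem, Finset.univ_inter]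
    _ = ∏ B ∈ ℬ, (∏ e ∈ B, x e) ^ c B :=
        Finset.prod_congr rfl fun B _ => finsetProd_rpow B x (fun e _ => (hx0 e).le) _
    _ ≤ ∏ B ∈ ℬ, (∑ B ∈ ℬ, ∏ e ∈ B, x e) ^ c B :=
        Finset.prod_le_prod (fun B hB => rpow_nonneg (hmono B hB) _)
          fun B hB => rpow_le_rpow (hmono B hB) (Finset.single_le_sum hmono hB) (hc B hB)
    _ = (∑ B ∈ ℬ, ∏ e ∈ B, x e) ^ ∑ B ∈ ℬ, c B :=
        (rpow_sum_of_nonneg (Finset.sum_nonneg hmono) hc).symm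

lemma prod_rpow_le_sum_prod_rpow [Fintype α] (hne : ℬ.Nonempty) {c : Finset α → ℝ}
    (hc : ∀ B ∈ ℬ, 0 ≤ c B) (hcover : ∀ e, 1 ≤ ∑ B ∈ ℬ, c B * (if e ∈ B then 1 else 0))
    {p s : ℝ} (hp : 0 ≤ p) (hps : p * ∑ B ∈ ℬ, c B ≤ s) {x : α → ℝ} (hx : ∀ e, 1 ≤ x e) :
    ∏ e, x e ^ p ≤ (∑ B ∈ ℬ, ∏ e ∈ B, x e) ^ s := by
  obtain ⟨B₀, hB₀⟩ := hne
  have hψ : 1 ≤ ∑ B ∈ ℬ, ∏ e ∈ B, x e :=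
    (Finset.one_le_prod fun e _ => hx e).trans <| Finset.single_le_sum
      (fun B _ => Finset.prod_nonneg fun e _ => zero_le_one.trans (hx e)) hB₀
  have hpcover : ∀ e, p ≤ ∑ B ∈ ℬ, p * c B * (if e ∈ B then 1 else 0) := fun e => by
    simp_rw [mul_assoc, ← Finset.mul_sum]
    exact le_mul_of_one_le_right hp (hcover e)
  calc ∏ e, x e ^ p
      ≤ (∑ B ∈ ℬ, ∏ e ∈ B, x e) ^ ∑ B ∈ ℬ, p * c B :=
        prod_rpow_le_sum_prod_rpow_of_cover hx (fun B hB => mul_nonneg hp (hc B hB)) hpcover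
    _ ≤ (∑ B ∈ ℬ, ∏ e ∈ B, x e) ^ s :=
        rpow_le_rpow_of_exponent_le hψ (by rwa [← Finset.mul_sum])

lemma norm_one_div_rpow_mul_prod_le [Fintype α] (hne : ℬ.Nonempty) {c : Finset α → ℝ}
    (hc : ∀ B ∈ ℬ, 0 ≤ c B) (hcover : ∀ e, 1 ≤ ∑ B ∈ ℬ, c B * (if e ∈ B then 1 else 0))
    {p s : ℝ} (hp : 0 ≤ p) (hps : p * ∑ B ∈ ℬ, c B ≤ s) {x w : α → ℝ} (hx : ∀ e, 1 ≤ x e)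
    (hw : ∀ e, 0 < w e) :
    ‖1 / ((∑ B ∈ ℬ, ∏ e ∈ B, x e) ^ s * ∏ e, w e)‖ ≤ ∏ e, (x e ^ p * w e)⁻¹ := by
  have hψ := prod_rpow_le_sum_prod_rpow hne hc hcover hp hps hx
  have hP : 0 < ∏ e, w e := Finset.prod_pos fun e _ => hw e
  have hQ : 0 < ∏ e, x e ^ p :=
    Finset.prod_pos fun e _ => rpow_pos_of_pos (one_pos.trans_le (hx e)) _
  calc ‖1 / ((∑ B ∈ ℬ, ∏ e ∈ B, x e) ^ s * ∏ e, w e)‖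
      = ((∑ B ∈ ℬ, ∏ e ∈ B, x e) ^ s * ∏ e, w e)⁻¹ := by
        rw [one_div, norm_inv, Real.norm_of_nonneg (mul_pos (hQ.trans_le hψ) hP).le]
    _ ≤ ((∏ e, x e ^ p) * ∏ e, w e)⁻¹ :=
        inv_anti₀ (mul_pos hQ hP) (mul_le_mul_of_nonneg_right hψ hP.le)
    _ = ∏ e, (x e ^ p * w e)⁻¹ := by
        rw [Finset.prod_inv_distrib, Finset.prod_mul_distrib]

end FractionalCover

theorem stmt_11_general {α : Type*} [Fintype α] [DecidableEq α]
    (ℬ : Finset (Finset α)) (hne : ℬ.Nonempty)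
    (hloopless : ∀ e : α, ∃ B ∈ ℬ, e ∈ B)
    (cM : ℝ)
    (hcM : cM = sInf { t : ℝ | ∃ c : Finset α → ℝ, (∀ B ∈ ℬ, 0 ≤ c B) ∧
        (∀ e : α, 1 ≤ ∑ B ∈ ℬ, c B * (if e ∈ B then 1 else 0)) ∧ t = ∑ B ∈ ℬ, c B })
    (s : ℝ) (hs : cM < s)
    (ε : ℝ) (hε1 : ε ≤ Real.exp (-1)) :
    IntegrableOn
      (fun z : α → ℂ =>
        1 / ((∑ B ∈ ℬ, ∏ e ∈ B, (-Real.log ‖z e‖)) ^ s *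
          ∏ e : α, ‖z e‖ ^ 2))
      (Metric.ball 0 ε) := by
  obtain ⟨c, hc, hcover, hcs⟩ := exists_fractionalCover_sum_lt hloopless (hcM ▸ hs)
  have hC : 0 ≤ ∑ B ∈ ℬ, c B := Finset.sum_nonneg hc
  set p := (s + 1) / (∑ B ∈ ℬ, c B + 1)
  have hp : 1 < p := (one_lt_div (by linarith)).2 (by linarith)
  have hps : p * ∑ B ∈ ℬ, c B ≤ s := by
    rw [div_mul_eq_mul_div, div_le_iff₀ (by linarith)]
    nlinarith
  have hdom : IntegrableOn (fun z : α → ℂ => ∏ e, ((-log ‖z e‖) ^ p * ‖z e‖ ^ 2)⁻¹)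
      (Metric.ball 0 ε) := by
    refine (IntegrableOn.fintype_prod fun _ =>
      integrableOn_ball_inv_neg_log_rpow_mul_norm_sq hp one_pos).mono_set ?_
    rw [← ball_pi _ (exp_pos _)]
    exact Metric.ball_subset_ball hε1
  have hae_ne : ∀ᵐ z : α → ℂ, ∀ e, z e ≠ 0 :=
    ae_all_iff.2 fun e => Measure.ae_eval_ne (fun _ => volume) e 0
  refine hdom.mono' (by fun_prop : Measurable _).aestronglyMeasurable ?_
  filter_upwards [ae_restrict_mem measurableSet_ball, ae_restrict_of_ae hae_ne] with z hz hz0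
  have hx : ∀ e, 1 ≤ -log ‖z e‖ := fun e => le_neg.2 <|
    (log_le_iff_le_exp (norm_pos_iff.2 (hz0 e))).2 <|
      ((norm_le_pi_norm z e).trans (mem_ball_zero_iff.1 hz).le).trans hε1
  exact norm_one_div_rpow_mul_prod_le hne hc hcover (by linarith) hps hx
    fun e => pow_pos (norm_pos_iff.2 (hz0 e)) 2

/-- Lemma 3.2(i) / the convergence half of Theorem A: for a loopless matroid with set of bases
`ℬ` on a finite nonempty ground set, with basis generating polynomial
`ψ_M(x) = Σ_{B∈ℬ} ∏_{e∈B} x_e` and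
`c(M) = inf{ Σ_B c_B : c_B ≥ 0, Σ_B c_B·χ_B ≥ 𝟙 }`, for every `s > c(M)` the function
`z ↦ 1 / (ψ_M((-ln|z_e|)_e)^s · ∏_e |z_e|²)` is integrable on the ball of radius
`ε ≤ e^{-1}` in `ℂ^E`. -/
theorem stmt_11 {α : Type*} [Fintype α] [DecidableEq α] [Nonempty α]
    (ℬ : Finset (Finset α)) (hne : ℬ.Nonempty)
    (r : ℕ) (hr : 1 ≤ r)
    (hcard : ∀ B ∈ ℬ, B.card = r)
    (hexch : ∀ B₁ ∈ ℬ, ∀ B₂ ∈ ℬ, ∀ e ∈ B₁ \ B₂,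
      ∃ f ∈ B₂ \ B₁, insert f (B₁.erase e) ∈ ℬ)
    (hloopless : ∀ e : α, ∃ B ∈ ℬ, e ∈ B)
    (cM : ℝ)
    (hcM : cM = sInf { t : ℝ | ∃ c : Finset α → ℝ, (∀ B ∈ ℬ, 0 ≤ c B) ∧
        (∀ e : α, 1 ≤ ∑ B ∈ ℬ, c B * (if e ∈ B then 1 else 0)) ∧ t = ∑ B ∈ ℬ, c B })
    (s : ℝ) (hs : cM < s)
    (ε : ℝ) (hε0 : 0 < ε) (hε1 : ε ≤ Real.exp (-1)) :
    IntegrableOn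
      (fun z : α → ℂ =>
        1 / ((∑ B ∈ ℬ, ∏ e ∈ B, (-Real.log ‖z e‖)) ^ s *
          ∏ e : α, ‖z e‖ ^ 2))
      (Metric.ball 0 ε) :=
  stmt_11_general ℬ hne hloopless cM hcM s hs ε hε1
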